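/- arXiv:1910.02601 — 2 statements merged into one kernel-verified Lean document; each statement's English description precedes it below -/
import Mathlib

section
/- Let (X,d) be a metric space, ε > 0 and x,y ∈ X with d_ε(x,y) < ∞. Then there exists z ∈ X such that |2 d_ε(x,z) − d_ε(x,y)| ≤ 5ε and |2 d_ε(y,z) − d_ε(x,y)| ≤ 5ε. -/
open Metric ENNReal

/-- The sum of distances along an `ε`-chain, and the `ε`-chain metric `d_ε`:
the infimum of total lengths of `ε`-chains from `x` to `y` (infimum of the
empty set being `∞`). An `ε`-chain from `x` to `y` is a finite sequence
`x_0, …, x_N` (`N ≥ 1`) with `x_0 = x`, `x_N = y` and `ρ (x_i) (x_{i+1}) < ε`. -/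
noncomputable def chainDist {X : Type*} (ρ : X → X → ℝ) (ε : ℝ) (x y : X) : ℝ≥0∞ :=
  ⨅ c : {c : ℕ × (ℕ → X) // 0 < c.1 ∧ c.2 0 = x ∧ c.2 c.1 = y ∧
      ∀ i < c.1, ρ (c.2 i) (c.2 (i + 1)) < ε},
    ∑ i ∈ Finset.range c.val.1, ENNReal.ofReal (ρ (c.val.2 i) (c.val.2 (i + 1)))

/-!
Take an `ε`-chain from `x` to `y` of length `L < d_ε(x,y) + ε` and let `z` be its first point
at which the partial length reaches `L / 2`; as every step is shorter than `ε`, the partial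
length there is below `L / 2 + ε`. The two halves of the chain bound `2 d_ε(x,z)` and
`2 d_ε(z,y)` from above by `d_ε(x,y) + O(ε)`, and the triangle inequality
`d_ε(x,y) ≤ d_ε(x,z) + d_ε(z,y)` turns the upper bound on each into a lower bound on the other.
-/

open Finset

theorem exists_le_le_add_of_succ_le_add {S : ℕ → ℝ} {N : ℕ} {t ε : ℝ} (hε : 0 ≤ ε)
    (hS : ∀ i < N, S (i + 1) ≤ S i + ε) (h0 : S 0 ≤ t) (hN : t ≤ S N) :
    ∃ k ≤ N, t ≤ S k ∧ S k ≤ t + ε := by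
  classical
  have hex : ∃ k, t ≤ S k := ⟨N, hN⟩
  refine ⟨Nat.find hex, Nat.find_min' hex hN, Nat.find_spec hex, ?_⟩
  rcases hk : Nat.find hex with _ | j
  · linarith
  · have hjN : j < N := by have := Nat.find_min' hex hN; omega
    have hj : S j < t := not_le.1 (Nat.find_min hex (by omega))
    linarith [hS j hjN]

theorem ENNReal.le_two_mul_add_of_le_add {a b c d : ℝ≥0∞} (hd : d ≠ ∞) (hab : d ≤ a + b)
    (hb : 2 * b ≤ d + c) : d ≤ 2 * a + c := by
  refine (ENNReal.add_le_add_iff_right hd).1 ?_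
  calc d + d = 2 * d := (two_mul d).symm
    _ ≤ 2 * a + 2 * b := by rw [← mul_add]; gcongr
    _ ≤ 2 * a + (d + c) := by gcongr
    _ = 2 * a + c + d := by ring

theorem ENNReal.two_mul_le_add_ofReal {a d : ℝ≥0∞} {s c : ℝ} (hd : d ≠ ∞)
    (ha : a ≤ ENNReal.ofReal s) (hs : 2 * s ≤ d.toReal + c) (hc : 0 ≤ c) :
    2 * a ≤ d + ENNReal.ofReal c :=
  calc 2 * a ≤ 2 * ENNReal.ofReal s := by gcongr
    _ = ENNReal.ofReal (2 * s) := by rw [ENNReal.ofReal_mul zero_le_two, ENNReal.ofReal_ofNat]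
    _ ≤ ENNReal.ofReal (d.toReal + c) := ENNReal.ofReal_le_ofReal hs
    _ = d + ENNReal.ofReal c := by rw [ENNReal.ofReal_add toReal_nonneg hc, ofReal_toReal hd]

section chainDist

variable {X : Type*} {ρ : X → X → ℝ} {ε : ℝ}

theorem chainDist_le_sum {N : ℕ} {f : ℕ → X} (hN : 0 < N) (hf : ∀ i < N, ρ (f i) (f (i + 1)) < ε) :
    chainDist ρ ε (f 0) (f N) ≤ ∑ i ∈ range N, ENNReal.ofReal (ρ (f i) (f (i + 1))) :=
  iInf_le_of_le ⟨(N, f), hN, rfl, rfl, hf⟩ le_rfl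

theorem chainDist_triangle (x y z : X) :
    chainDist ρ ε x z ≤ chainDist ρ ε x y + chainDist ρ ε y z := by
  refine ENNReal.le_iInf_add_iInf fun ⟨⟨N, f⟩, hN, hf0, hfN, hf⟩ ⟨⟨M, g⟩, _, hg0, hgM, hg⟩ => ?_
  dsimp only at hN hf0 hfN hf hg0 hgM hg
  subst hf0 hfN hgM
  let F : ℕ → X := fun i => if i ≤ N then f i else g (i - N)
  have hF_left : ∀ i ≤ N, F i = f i := fun i hi => if_pos hi
  have hF_right : ∀ j, F (N + j) = g j := by
    rintro (_ | j)
    · simpa [F] using hg0.symm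
    · simp [F]
  have hF : ∀ i < N + M, ρ (F i) (F (i + 1)) < ε := by
    intro i hi
    rcases lt_or_ge i N with hiN | hiN
    · rw [hF_left i hiN.le, hF_left (i + 1) hiN]
      exact hf i hiN
    · obtain ⟨j, rfl⟩ := Nat.exists_eq_add_of_le hiN
      rw [hF_right, add_assoc, hF_right]
      exact hg j (by omega)
  have hchain := chainDist_le_sum (by omega) hF
  rw [hF_left 0 (Nat.zero_le N), hF_right M] at hchain
  refine hchain.trans_eq ?_
  rw [sum_range_add]
  congr 1
  · refine sum_congr rfl fun i hi => ?_
    rw [hF_left i (mem_range.1 hi).le, hF_left (i + 1) (mem_range.1 hi)]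
  · refine sum_congr rfl fun j _ => ?_
    rw [hF_right, add_assoc, hF_right]

theorem chainDist_comm_le (hρ : ∀ a b, ρ a b = ρ b a) (x y : X) :
    chainDist ρ ε x y ≤ chainDist ρ ε y x := by
  refine le_iInf fun ⟨⟨N, f⟩, hN, hf0, hfN, hf⟩ => ?_
  dsimp only at hN hf0 hfN hf
  subst hf0 hfN
  have hrev : ∀ i < N, ρ (f (N - i)) (f (N - (i + 1))) < ε := fun i hi => by
    rw [hρ, show N - i = N - (i + 1) + 1 by omega]
    exact hf _ (by omega)
  have hchain := chainDist_le_sum (f := fun i => f (N - i)) hN hrev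
  simp only [Nat.sub_zero, Nat.sub_self] at hchain
  refine hchain.trans_eq ?_
  rw [← sum_range_reflect _ N]
  refine sum_congr rfl fun i hi => ?_
  have hi : i < N := mem_range.1 hi
  rw [show N - (N - 1 - i + 1) = i by omega, show N - (N - 1 - i) = i + 1 by omega, hρ]

theorem chainDist_comm (hρ : ∀ a b, ρ a b = ρ b a) (x y : X) :
    chainDist ρ ε x y = chainDist ρ ε y x :=
  (chainDist_comm_le hρ x y).antisymm (chainDist_comm_le hρ y x)

end chainDist

section PseudoMetricSpace

variable {X : Type*} [PseudoMetricSpace X] {ε : ℝ}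

theorem chainDist_le_sum_Ico (hε : 0 < ε) {f : ℕ → X} {m n : ℕ} (hmn : m ≤ n)
    (hf : ∀ i ∈ Ico m n, dist (f i) (f (i + 1)) < ε) :
    chainDist dist ε (f m) (f n) ≤ ENNReal.ofReal (∑ i ∈ Ico m n, dist (f i) (f (i + 1))) := by
  rcases hmn.eq_or_lt with rfl | hlt
  · simpa using chainDist_le_sum (ρ := dist) (f := fun _ => f m) one_pos (by simpa using hε)
  · have hg : ∀ i < n - m, dist (f (m + i)) (f (m + (i + 1))) < ε := fun i hi =>
      hf _ (mem_Ico.2 ⟨by omega, by omega⟩)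
    have hchain := chainDist_le_sum (f := fun i => f (m + i)) (by omega) hg
    rw [add_zero, Nat.add_sub_cancel' hmn] at hchain
    rw [sum_Ico_eq_sum_range, ENNReal.ofReal_sum_of_nonneg fun _ _ => dist_nonneg]
    exact hchain

theorem exists_chain_sum_lt {x y : X} (hfin : chainDist dist ε x y ≠ ∞) {δ : ℝ} (hδ : 0 < δ) :
    ∃ (N : ℕ) (f : ℕ → X), f 0 = x ∧ f N = y ∧ (∀ i < N, dist (f i) (f (i + 1)) < ε) ∧
      ∑ i ∈ range N, dist (f i) (f (i + 1)) < (chainDist dist ε x y).toReal + δ := by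
  have hlt : chainDist dist ε x y < chainDist dist ε x y + ENNReal.ofReal δ :=
    ENNReal.lt_add_right hfin (ENNReal.ofReal_pos.2 hδ).ne'
  obtain ⟨⟨⟨N, f⟩, _, hf0, hfN, hf⟩, hsum⟩ := iInf_lt_iff.1 hlt
  dsimp only at hf0 hfN hf hsum
  refine ⟨N, f, hf0, hfN, hf, ?_⟩
  rw [← ENNReal.ofReal_sum_of_nonneg fun _ _ => dist_nonneg,
    ENNReal.ofReal_lt_iff_lt_toReal (sum_nonneg fun _ _ => dist_nonneg)
      (ENNReal.add_ne_top.2 ⟨hfin, ENNReal.ofReal_ne_top⟩),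
    ENNReal.toReal_add hfin ENNReal.ofReal_ne_top, ENNReal.toReal_ofReal hδ.le] at hsum
  exact hsum

end PseudoMetricSpace

/-- Lemma A.3: approximate midpoints for the `ε`-chain metric.
If `d_ε(x,y) < ∞` then there is `z` with `|2 d_ε(x,z) − d_ε(x,y)| ≤ 5ε` and
`|2 d_ε(y,z) − d_ε(x,y)| ≤ 5ε` (the absolute-value inequalities being expressed
as pairs of one-sided inequalities in `ℝ≥0∞`). -/
theorem chainDist_approx_midpoint {X : Type*} [MetricSpace X] (ε : ℝ) (hε : 0 < ε)
    (x y : X) (hfin : chainDist dist ε x y ≠ ∞) :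
    ∃ z : X,
      (2 * chainDist dist ε x z ≤ chainDist dist ε x y + ENNReal.ofReal (5 * ε) ∧
        chainDist dist ε x y ≤ 2 * chainDist dist ε x z + ENNReal.ofReal (5 * ε)) ∧
      (2 * chainDist dist ε y z ≤ chainDist dist ε x y + ENNReal.ofReal (5 * ε) ∧
        chainDist dist ε x y ≤ 2 * chainDist dist ε y z + ENNReal.ofReal (5 * ε)) := by
  obtain ⟨N, f, rfl, rfl, hf, hL⟩ := exists_chain_sum_lt hfin hε
  set D := chainDist dist ε (f 0) (f N)
  set S : ℕ → ℝ := fun k => ∑ i ∈ range k, dist (f i) (f (i + 1))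
  have hS_step : ∀ i < N, S (i + 1) ≤ S i + ε := fun i hi => by
    simpa [S, sum_range_succ] using (hf i hi).le
  obtain ⟨k, hkN, hk_ge, hk_le⟩ := exists_le_le_add_of_succ_le_add hε.le hS_step
    (t := S N / 2) (by simp [S]; positivity) (by linarith [show 0 ≤ S N by positivity])
  have hx : chainDist dist ε (f 0) (f k) ≤ ENNReal.ofReal (S k) := by
    have hchain := chainDist_le_sum_Ico hε k.zero_le fun i hi => hf i ((mem_Ico.1 hi).2.trans_le hkN)
    rwa [← range_eq_Ico] at hchain
  have hy : chainDist dist ε (f N) (f k) ≤ ENNReal.ofReal (S N - S k) := by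
    rw [chainDist_comm dist_comm, ← sum_Ico_eq_sub _ hkN]
    exact chainDist_le_sum_Ico hε hkN fun i hi => hf i (mem_Ico.1 hi).2
  have h2x := ENNReal.two_mul_le_add_ofReal hfin hx (c := 5 * ε) (by linarith) (by positivity)
  have h2y := ENNReal.two_mul_le_add_ofReal hfin hy (c := 5 * ε) (by linarith) (by positivity)
  have htri : D ≤ chainDist dist ε (f 0) (f k) + chainDist dist ε (f N) (f k) := by
    rw [chainDist_comm dist_comm (f N)]
    exact chainDist_triangle _ _ _
  exact ⟨f k, ⟨h2x, ENNReal.le_two_mul_add_of_le_add hfin htri h2y⟩,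
    h2y, ENNReal.le_two_mul_add_of_le_add hfin (htri.trans_eq (add_comm _ _)) h2x⟩
end

section
/- Let (X,d) be a complete metric space and let m be a Borel measure on X that is finite and strictly positive on every open ball and satisfies m(B(x,2r)) ≤ C_D m(B(x,r)) for all x ∈ X and r > 0, for some constant C_D > 1. Then every open ball B(x,r) is relatively compact in X (i.e., has compact closure). -/
/-!
A ball `B(x, r)` in a complete space has compact closure as soon as it is totally bounded, and
an `ε`-separated sequence in `B(x, r)` cannot be infinite: the disjoint balls `B(f n, ε/2)` all
lie in `B(x, r + ε/2)`, which has finite measure, while iterated doubling gives each of them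
measure at least `C⁻ᵏ m(B(x, r))` with `2ᵏ ε/2 ≥ 2r`.
-/

open Metric ENNReal MeasureTheory

theorem Metric.totallyBounded_of_forall_not_pairwise_le_dist {X : Type*} [PseudoMetricSpace X]
    {s : Set X}
    (h : ∀ ε > 0, ∀ f : ℕ → X, (∀ n, f n ∈ s) → ¬ Pairwise fun i j ↦ ε ≤ dist (f i) (f j)) :
    TotallyBounded s := by
  rw [Metric.totallyBounded_iff]
  by_contra! hcover
  obtain ⟨ε, hε, hnot_cover⟩ := hcover
  have : Std.Symm fun a b : X ↦ ε ≤ dist a b := ⟨fun a b hab ↦ by rwa [dist_comm]⟩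
  obtain ⟨f, hfs, hf⟩ := exists_seq_of_forall_finset_exists' (· ∈ s) (fun a b ↦ ε ≤ dist a b)
    fun t _ ↦ by
      obtain ⟨z, hzs, hz⟩ := Set.not_subset.mp (hnot_cover t t.finite_toSet)
      refine ⟨z, hzs, fun w hw ↦ le_of_not_gt fun hlt ↦ hz ?_⟩
      exact Set.mem_iUnion₂.mpr ⟨w, hw, by rwa [mem_ball, dist_comm]⟩
  exact h ε hε f hfs hf

section Doubling

variable {X : Type*} [PseudoMetricSpace X] [MeasurableSpace X] {μ : Measure X} {C : ℝ≥0∞}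

theorem measure_ball_two_pow_mul_le
    (hVD : ∀ (x : X) (r : ℝ), 0 < r → μ (ball x (2 * r)) ≤ C * μ (ball x r))
    (x : X) {r : ℝ} (hr : 0 < r) (k : ℕ) :
    μ (ball x (2 ^ k * r)) ≤ C ^ k * μ (ball x r) := by
  induction k with
  | zero => simp
  | succ k ih =>
    calc μ (ball x (2 ^ (k + 1) * r)) = μ (ball x (2 * (2 ^ k * r))) := by ring_nf
      _ ≤ C * μ (ball x (2 ^ k * r)) := hVD x _ (by positivity)
      _ ≤ C * (C ^ k * μ (ball x r)) := by gcongr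
      _ = C ^ (k + 1) * μ (ball x r) := by ring

theorem exists_pow_forall_measure_ball_le_mul_measure_ball_of_mem
    (hVD : ∀ (x : X) (r : ℝ), 0 < r → μ (ball x (2 * r)) ≤ C * μ (ball x r))
    (r : ℝ) {s : ℝ} (hs : 0 < s) :
    ∃ k : ℕ, ∀ x y : X, y ∈ ball x r → μ (ball x r) ≤ C ^ k * μ (ball y s) := by
  obtain ⟨k, hk⟩ := pow_unbounded_of_one_lt (2 * r / s) (one_lt_two (α := ℝ))
  rw [div_lt_iff₀ hs] at hk
  refine ⟨k, fun x y hy ↦ ?_⟩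
  have hsub : ball x r ⊆ ball y (2 ^ k * s) := by
    refine ball_subset_ball' ?_
    rw [mem_ball, dist_comm] at hy
    linarith
  exact (measure_mono hsub).trans (measure_ball_two_pow_mul_le hVD y hs k)

theorem measure_iUnion_ball_eq_top_of_pairwise_le_dist [OpensMeasurableSpace X]
    {δ : ℝ≥0∞} {ε : ℝ} (hδ : 0 < δ) {f : ℕ → X}
    (hf : Pairwise fun i j ↦ ε ≤ dist (f i) (f j)) (hμ : ∀ n, δ ≤ μ (ball (f n) (ε / 2))) :
    μ (⋃ n, ball (f n) (ε / 2)) = ∞ := by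
  by_contra hfin
  have hdisj : Pairwise (Function.onFun Disjoint fun n ↦ ball (f n) (ε / 2)) :=
    fun i j hij ↦ ball_disjoint_ball (by linarith [hf hij] : ε / 2 + ε / 2 ≤ _)
  refine Set.infinite_univ (α := ℕ) ?_
  simpa only [hμ, Set.ofPred_true] using
    Measure.finite_const_le_meas_of_disjoint_iUnion μ hδ (fun _ ↦ measurableSet_ball) hdisj hfin

theorem totallyBounded_ball_of_doubling [OpensMeasurableSpace X] (hC : C ≠ ∞)
    (hVD : ∀ (x : X) (r : ℝ), 0 < r → μ (ball x (2 * r)) ≤ C * μ (ball x r))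
    {x : X} {r : ℝ} (hfin : ∀ s, 0 < s → μ (ball x s) < ∞) (hpos : 0 < μ (ball x r)) :
    TotallyBounded (ball x r) := by
  refine totallyBounded_of_forall_not_pairwise_le_dist fun ε hε f hf hsep ↦ ?_
  obtain ⟨k, hk⟩ := exists_pow_forall_measure_ball_le_mul_measure_ball_of_mem hVD r
    (half_pos hε)
  have hlower : ∀ n, μ (ball x r) / C ^ k ≤ μ (ball (f n) (ε / 2)) :=
    fun n ↦ ENNReal.div_le_of_le_mul' (hk x (f n) (hf n))
  have hr : 0 < r := pos_of_mem_ball (hf 0)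
  have htop := measure_iUnion_ball_eq_top_of_pairwise_le_dist
    (ENNReal.div_pos hpos.ne' (pow_ne_top hC)) hsep hlower
  have hsub : (⋃ n, ball (f n) (ε / 2)) ⊆ ball x (r + ε / 2) :=
    Set.iUnion_subset fun n ↦ ball_subset_ball' (by linarith [mem_ball.mp (hf n)])
  exact (measure_mono hsub).trans_lt (hfin _ (by linarith)) |>.ne htop

end Doubling

theorem ball_relatively_compact_of_doubling_measure_general {X : Type*} [MetricSpace X]
    [CompleteSpace X] [MeasurableSpace X] [BorelSpace X] (m : Measure X)
    (hfin : ∀ (x : X) (r : ℝ), 0 < r → m (Metric.ball x r) < ∞)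
    (hpos : ∀ (x : X) (r : ℝ), 0 < r → 0 < m (Metric.ball x r))
    (C_D : ℝ)
    (hVD : ∀ (x : X) (r : ℝ), 0 < r →
      m (Metric.ball x (2 * r)) ≤ ENNReal.ofReal C_D * m (Metric.ball x r)) :
    ∀ (x : X) (r : ℝ), IsCompact (closure (Metric.ball x r)) := by
  intro x r
  rcases le_or_gt r 0 with hr | hr
  · simp [ball_eq_empty.mpr hr]
  have htb := totallyBounded_ball_of_doubling ofReal_ne_top hVD (hfin x) (hpos x r hr)
  exact htb.closure.isCompact_of_isClosed isClosed_closure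

/-- on a complete metric space carrying a Borel measure that is
finite and strictly positive on every open ball and doubling, every open ball is
relatively compact (has compact closure). -/
theorem ball_relatively_compact_of_doubling_measure {X : Type*} [MetricSpace X]
    [CompleteSpace X] [MeasurableSpace X] [BorelSpace X] (m : Measure X)
    (hfin : ∀ (x : X) (r : ℝ), 0 < r → m (Metric.ball x r) < ∞)
    (hpos : ∀ (x : X) (r : ℝ), 0 < r → 0 < m (Metric.ball x r))
    (C_D : ℝ) (hCD : 1 < C_D)
    (hVD : ∀ (x : X) (r : ℝ), 0 < r →
      m (Metric.ball x (2 * r)) ≤ ENNReal.ofReal C_D * m (Metric.ball x r)) :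
    ∀ (x : X) (r : ℝ), IsCompact (closure (Metric.ball x r)) :=
  ball_relatively_compact_of_doubling_measure_general m hfin hpos C_D hVD
end
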